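/- arXiv:2408.01352 — 2 statements merged into one kernel-verified Lean document; each statement's English description precedes it below -/
import Mathlib

section
/- Let k ≥ 1 be an integer, a ≥ k a real number, t ≥ 0, and ζ a continuous function on [0,∞) with compact support. Then lim_{ε→0+} ∫_0^∞ ζ(r) r^{a+2} h_ε″(r²) (h_ε′(r²))^{k−1} dr = −2^{−(k+1)} ∫_t^∞ ζ(r) r^{a−k} dr + (2^{−(k+1)}/k) ζ(t) t^{a+1−k} (since a + 1 − k ≥ 1, the last term vanishes when t = 0). -/
/-!
Write `u = √(s + ε²)` and `ψ_ε(u) = (1 + (u - t) / √((u - t)² + ε²)) / 4`. Then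
`h_ε'(s) = ψ_ε(u) / u` and `h_ε''(s) = (ψ_ε'(u) u - ψ_ε(u)) / (2 u³)`, so at `s = r²` the
integrand splits as `ζ r^{a+2} ψ^{k-1} ψ' / (2 u^{k+1}) - ζ r^{a+2} ψ^k / (2 u^{k+2})`.

Since `0 ≤ ψ_ε ≤ 1/2` and `ψ_ε → (1 + sign (u - t)) / 4`, the second part converges by dominated
convergence to `2^{-(k+1)} ζ r^{a-k}` on `r > t` and to `0` on `r < t`. The first part is
`(2k)⁻¹ (ζ r^{a+1} / u^k) (d/dr) ψ_ε(u)^k`: the increasing functions `ψ_ε(u(r))^k` converge to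
the step `2^{-k} 1_{r > t}`, so their derivatives concentrate at `r = t`, while
`ζ r^{a+1} / u^k` converges uniformly to `ζ r^{a+1-k}`. Hence the first part tends to
`2^{-(k+1)} ζ(t) t^{a+1-k} / k`.
-/

noncomputable section

open Filter Topology

def heps (t ε : ℝ) : ℝ → ℝ := fun s =>
  (1 / 2) * (Real.sqrt ((Real.sqrt (s + ε ^ 2) - t) ^ 2 + ε ^ 2) + Real.sqrt (s + ε ^ 2) - t)

open Set MeasureTheory

section Concentration

variable {ι : Type*} {l : Filter ι}

lemma integral_eq_sub_of_hasDerivAt_of_nonneg {W w : ℝ → ℝ} {x y : ℝ} (hxy : x ≤ y)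
    (hW : ∀ r ∈ Icc x y, HasDerivAt W (w r) r ∧ 0 ≤ w r) :
    IntervalIntegrable w volume x y ∧ ∫ r in x..y, w r = W y - W x := by
  have hwi : IntervalIntegrable w volume x y :=
    (intervalIntegrable_iff_integrableOn_Ioc_of_le hxy).2 <|
      intervalIntegral.integrableOn_deriv_of_nonneg
        (fun r hr => (hW r hr).1.continuousAt.continuousWithinAt)
        (fun r hr => (hW r (Ioo_subset_Icc_self hr)).1)
        (fun r hr => (hW r (Ioo_subset_Icc_self hr)).2)
  refine ⟨hwi, intervalIntegral.integral_eq_sub_of_hasDerivAt (fun r hr => (hW r ?_).1) hwi⟩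
  rwa [uIcc_of_le hxy] at hr

lemma abs_integral_mul_le_of_hasDerivAt {f W w : ℝ → ℝ} {x y β : ℝ} (hxy : x ≤ y)
    (hW : ∀ r ∈ Icc x y, HasDerivAt W (w r) r ∧ 0 ≤ w r) (hf : ∀ r ∈ Icc x y, |f r| ≤ β) :
    |∫ r in x..y, f r * w r| ≤ β * (W y - W x) := by
  obtain ⟨hwi, hFTC⟩ := integral_eq_sub_of_hasDerivAt_of_nonneg hxy hW
  rw [← hFTC, ← intervalIntegral.integral_const_mul β w, ← Real.norm_eq_abs]
  refine intervalIntegral.norm_integral_le_of_norm_le hxy (ae_of_all _ fun r hr => ?_)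
    (hwi.const_mul β)
  have hw := (hW r (Ioc_subset_Icc_self hr)).2
  rw [Real.norm_eq_abs, abs_mul, abs_of_nonneg hw]
  exact mul_le_mul_of_nonneg_right (hf r (Ioc_subset_Icc_self hr)) hw

lemma abs_integral_mul_le_of_abs_le_on_Icc {f W w : ℝ → ℝ} {x p q y B σ : ℝ}
    (hxp : x ≤ p) (hpq : p ≤ q) (hqy : q ≤ y)
    (hW : ∀ r ∈ Icc x y, HasDerivAt W (w r) r ∧ 0 ≤ w r)
    (hfw : IntervalIntegrable (fun r => f r * w r) volume x y)
    (hB : ∀ r ∈ Icc x y, |f r| ≤ B) (hσ : ∀ r ∈ Icc p q, |f r| ≤ σ) :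
    |∫ r in x..y, f r * w r| ≤ B * (W p - W x) + σ * (W q - W p) + B * (W y - W q) := by
  have bound : ∀ {a b β}, x ≤ a → a ≤ b → b ≤ y → (∀ r ∈ Icc a b, |f r| ≤ β) →
      |∫ r in a..b, f r * w r| ≤ β * (W b - W a) := fun ha hab hb hf =>
    abs_integral_mul_le_of_hasDerivAt hab (fun r hr => hW r ⟨ha.trans hr.1, hr.2.trans hb⟩) hf
  have hint : ∀ {a b}, x ≤ a → a ≤ b → b ≤ y →
      IntervalIntegrable (fun r => f r * w r) volume a b := fun ha hab hb =>
    hfw.mono_set (by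
      rw [uIcc_of_le hab, uIcc_of_le ((ha.trans hab).trans hb)]; exact Icc_subset_Icc ha hb)
  have hpy := hpq.trans hqy
  have hxq := hxp.trans hpq
  rw [← intervalIntegral.integral_add_adjacent_intervals (hint le_rfl hxp hpy)
      (hint hxp hpy le_rfl),
    ← intervalIntegral.integral_add_adjacent_intervals (hint hxp hpq hqy) (hint hxq hqy le_rfl)]
  have h₁ := bound le_rfl hxp hpy fun r hr => hB r ⟨hr.1, hr.2.trans hpy⟩
  have h₂ := bound hxp hpq hqy hσ
  have h₃ := bound (b := y) hxq hqy le_rfl fun r hr => hB r ⟨hxq.trans hr.1, hr.2⟩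
  calc _ ≤ |∫ r in x..p, f r * w r| +
        (|∫ r in p..q, f r * w r| + |∫ r in q..y, f r * w r|) :=
        (abs_add_le _ _).trans (by gcongr; exact abs_add_le _ _)
    _ ≤ _ := by linarith

lemma tendsto_integral_mul_of_concentrated {f W w : ι → ℝ → ℝ} {x t y B K : ℝ}
    (hxt : x ≤ t) (hty : t ≤ y)
    (hW : ∀ᶠ i in l, ∀ r ∈ Icc x y, HasDerivAt (W i) (w i r) r ∧ 0 ≤ w i r)
    (hK : ∀ᶠ i in l, ∀ r ∈ Icc x y, |W i r| ≤ K)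
    (hleft : ∀ p ∈ Ico x t, Tendsto (fun i => W i p - W i x) l (𝓝 0))
    (hright : ∀ q ∈ Ioc t y, Tendsto (fun i => W i y - W i q) l (𝓝 0))
    (hfw : ∀ᶠ i in l, IntervalIntegrable (fun r => f i r * w i r) volume x y)
    (hB : ∀ᶠ i in l, ∀ r ∈ Icc x y, |f i r| ≤ B)
    (hsmall : ∀ σ > 0, ∃ δ > 0, ∀ᶠ i in l, ∀ r ∈ Icc x y, |r - t| < δ → |f i r| ≤ σ) :
    Tendsto (fun i => ∫ r in x..y, f i r * w i r) l (𝓝 0) := by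
  rw [Metric.tendsto_nhds]
  intro σ hσ
  set σ' := σ / (4 * (|K| + 1)) with hσ'
  have hσ'K : σ' * (2 * |K|) < σ / 2 := by
    rw [hσ', div_mul_eq_mul_div, div_lt_div_iff₀ (by positivity) two_pos]
    nlinarith [abs_nonneg K]
  obtain ⟨δ, hδ, hnear⟩ := hsmall σ' (by positivity)
  obtain ⟨p, hxp, hpt, hδp, hp⟩ : ∃ p, x ≤ p ∧ p ≤ t ∧ t - δ < p ∧
      Tendsto (fun i => W i p - W i x) l (𝓝 0) := by
    by_cases h : t - δ < x
    · exact ⟨x, le_rfl, hxt, h, by simpa using tendsto_const_nhds⟩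
    · exact ⟨t - δ / 2, by linarith, by linarith, by linarith,
        hleft _ ⟨by linarith, by linarith⟩⟩
  obtain ⟨q, htq, hqy, hδq, hq⟩ : ∃ q, t ≤ q ∧ q ≤ y ∧ q < t + δ ∧
      Tendsto (fun i => W i y - W i q) l (𝓝 0) := by
    by_cases h : y < t + δ
    · exact ⟨y, hty, le_rfl, h, by simpa using tendsto_const_nhds⟩
    · exact ⟨t + δ / 2, by linarith, by linarith, by linarith,
        hright _ ⟨by linarith, by linarith⟩⟩
  have houter : ∀ᶠ i in l, B * (W i p - W i x) + B * (W i y - W i q) < σ / 2 := by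
    have := (hp.const_mul B).add (hq.const_mul B)
    rw [mul_zero, add_zero] at this
    exact (tendsto_order.1 this).2 _ (by positivity)
  filter_upwards [hW, hK, hfw, hB, hnear, houter] with i hWi hKi hfwi hBi hnear_i houter_i
  have h := abs_integral_mul_le_of_abs_le_on_Icc hxp (hpt.trans htq) hqy hWi hfwi hBi
    fun r hr => hnear_i r ⟨hxp.trans hr.1, hr.2.trans hqy⟩
      (abs_lt.2 ⟨by linarith [hr.1], by linarith [hr.2]⟩)
  have hmass : W i q - W i p ≤ 2 * |K| := by
    linarith [abs_le.1 (hKi q ⟨hxt.trans htq, hqy⟩), abs_le.1 (hKi p ⟨hxp, hpt.trans hty⟩),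
      le_abs_self K]
  have hmiddle : σ' * (W i q - W i p) ≤ σ' * (2 * |K|) := by gcongr
  rw [dist_zero_right, Real.norm_eq_abs]
  linarith

lemma tendsto_integral_mul_sub_of_tendstoUniformlyOn {g W w : ι → ℝ → ℝ} {g₀ : ℝ → ℝ}
    {x t y K : ℝ} (hxt : x ≤ t) (hty : t ≤ y)
    (hg : TendstoUniformlyOn g g₀ l (Icc x y)) (hg₀ : ContinuousOn g₀ (Icc x y))
    (hgw : ∀ᶠ i in l, IntervalIntegrable (fun r => g i r * w i r) volume x y)
    (hW : ∀ᶠ i in l, ∀ r ∈ Icc x y, HasDerivAt (W i) (w i r) r ∧ 0 ≤ w i r)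
    (hK : ∀ᶠ i in l, ∀ r ∈ Icc x y, |W i r| ≤ K)
    (hleft : ∀ p ∈ Ico x t, Tendsto (fun i => W i p - W i x) l (𝓝 0))
    (hright : ∀ q ∈ Ioc t y, Tendsto (fun i => W i y - W i q) l (𝓝 0)) :
    Tendsto (fun i => (∫ r in x..y, g i r * w i r) - g₀ t * (W i y - W i x)) l (𝓝 0) := by
  have hxy : x ≤ y := hxt.trans hty
  have hFTC : ∀ᶠ i in l, IntervalIntegrable (w i) volume x y ∧
      ∫ r in x..y, w i r = W i y - W i x :=
    hW.mono fun i hWi => integral_eq_sub_of_hasDerivAt_of_nonneg hxy hWi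
  obtain ⟨C, hC⟩ := isCompact_Icc.exists_bound_of_continuousOn hg₀
  have hclose : ∀ σ > 0, ∀ᶠ i in l, ∀ r ∈ Icc x y, |g i r - g₀ r| < σ := fun σ hσ =>
    (Metric.tendstoUniformlyOn_iff.1 hg σ hσ).mono fun i hi r hr => by
      rw [abs_sub_comm]; exact hi r hr
  refine (tendsto_integral_mul_of_concentrated (f := fun i r => g i r - g₀ t) (B := 1 + 2 * C)
    hxt hty hW hK hleft hright ?_ ?_ ?_).congr' ?_
  · filter_upwards [hgw, hFTC] with i hgwi hwi
    simpa only [sub_mul] using hgwi.sub (hwi.1.const_mul (g₀ t))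
  · filter_upwards [hclose 1 one_pos] with i hi r hr
    have h₁ := hC r hr
    have h₂ := hC t ⟨hxt, hty⟩
    rw [Real.norm_eq_abs] at h₁ h₂
    calc |g i r - g₀ t| ≤ |g i r - g₀ r| + |g₀ r - g₀ t| := abs_sub_le _ _ _
      _ ≤ |g i r - g₀ r| + (|g₀ r| + |g₀ t|) := by gcongr; exact abs_sub _ _
      _ ≤ 1 + 2 * C := by linarith [hi r hr]
  · intro σ hσ
    obtain ⟨δ, hδ, hδg⟩ :=
      Metric.continuousWithinAt_iff.1 (hg₀ t ⟨hxt, hty⟩) (σ / 2) (by positivity)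
    refine ⟨δ, hδ, ?_⟩
    filter_upwards [hclose (σ / 2) (by positivity)] with i hi r hr hrt
    have := hδg hr (by rwa [Real.dist_eq])
    rw [Real.dist_eq] at this
    calc |g i r - g₀ t| ≤ |g i r - g₀ r| + |g₀ r - g₀ t| := abs_sub_le _ _ _
      _ ≤ σ := by linarith [hi r hr]
  · filter_upwards [hgw, hFTC] with i hgwi hwi
    rw [← hwi.2, ← intervalIntegral.integral_const_mul, ← intervalIntegral.integral_sub hgwi
      (hwi.1.const_mul _)]
    simp only [sub_mul]

end Concentration

lemma setIntegral_Ioi_eq_intervalIntegral {f : ℝ → ℝ} {x y : ℝ} (hxy : x ≤ y)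
    (hf : ∀ r, y < r → f r = 0) : ∫ r in Ioi x, f r = ∫ r in x..y, f r := by
  rw [intervalIntegral.integral_of_le hxy]
  exact setIntegral_eq_of_subset_of_forall_sdiff_eq_zero measurableSet_Ioi Ioc_subset_Ioi_self
    fun r hr => hf r (not_le.1 fun h => hr.2 ⟨hr.1, h⟩)

section SmoothStep

variable {t ε : ℝ}

lemma abs_le_sqrt_sq_add_sq (x ε : ℝ) : |x| ≤ √(x ^ 2 + ε ^ 2) := by
  rw [← Real.sqrt_sq_eq_abs]
  exact Real.sqrt_le_sqrt (by nlinarith)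

lemma abs_div_sqrt_sq_add_sq_le_one (x ε : ℝ) : |x / √(x ^ 2 + ε ^ 2)| ≤ 1 := by
  rw [abs_div, abs_of_nonneg (Real.sqrt_nonneg _)]
  exact div_le_one_of_le₀ (abs_le_sqrt_sq_add_sq x ε) (Real.sqrt_nonneg _)

lemma hasDerivAt_sqrt_sq_add_sq (hε : ε ≠ 0) (x : ℝ) :
    HasDerivAt (fun x => √(x ^ 2 + ε ^ 2)) (x / √(x ^ 2 + ε ^ 2)) x := by
  refine (((hasDerivAt_pow 2 x).add_const (ε ^ 2)).sqrt (by positivity)).congr_deriv ?_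
  field_simp
  push_cast
  ring

lemma hasDerivAt_div_sqrt_sq_add_sq (hε : ε ≠ 0) (x : ℝ) :
    HasDerivAt (fun x => x / √(x ^ 2 + ε ^ 2)) (ε ^ 2 / √(x ^ 2 + ε ^ 2) ^ 3) x := by
  have hv : 0 < √(x ^ 2 + ε ^ 2) := by positivity
  have hv2 : √(x ^ 2 + ε ^ 2) ^ 2 = x ^ 2 + ε ^ 2 := Real.sq_sqrt (by positivity)
  refine ((hasDerivAt_id' x).div (hasDerivAt_sqrt_sq_add_sq hε x) hv.ne').congr_deriv ?_
  field_simp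
  linear_combination hv2

def psi (t ε u : ℝ) : ℝ := (1 + (u - t) / √((u - t) ^ 2 + ε ^ 2)) / 4

def psiDeriv (t ε u : ℝ) : ℝ := ε ^ 2 / (4 * √((u - t) ^ 2 + ε ^ 2) ^ 3)

lemma psi_nonneg (t ε u : ℝ) : 0 ≤ psi t ε u := by
  have := abs_le.1 (abs_div_sqrt_sq_add_sq_le_one (u - t) ε)
  unfold psi; linarith

lemma psi_le_half (t ε u : ℝ) : psi t ε u ≤ 1 / 2 := by
  have := abs_le.1 (abs_div_sqrt_sq_add_sq_le_one (u - t) ε)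
  unfold psi; linarith

lemma abs_psi_pow_le_one (t ε u : ℝ) (k : ℕ) : |psi t ε u ^ k| ≤ 1 := by
  rw [abs_of_nonneg (pow_nonneg (psi_nonneg t ε u) k)]
  exact pow_le_one₀ (psi_nonneg t ε u) ((psi_le_half t ε u).trans (by norm_num))

lemma psiDeriv_nonneg (t ε u : ℝ) : 0 ≤ psiDeriv t ε u := by
  unfold psiDeriv; positivity

lemma psi_zero_of_lt {u : ℝ} (h : u < t) : psi t 0 u = 0 := by
  rw [psi, zero_pow two_ne_zero, add_zero, Real.sqrt_sq_eq_abs, abs_of_neg (sub_neg.2 h),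
    div_neg, div_self (sub_ne_zero.2 h.ne)]
  ring

lemma psi_zero_of_gt {u : ℝ} (h : t < u) : psi t 0 u = 1 / 2 := by
  rw [psi, zero_pow two_ne_zero, add_zero, Real.sqrt_sq_eq_abs, abs_of_pos (sub_pos.2 h),
    div_self (sub_ne_zero.2 h.ne')]
  norm_num

lemma hasDerivAt_psi (hε : ε ≠ 0) (u : ℝ) : HasDerivAt (psi t ε) (psiDeriv t ε u) u := by
  refine ((((hasDerivAt_div_sqrt_sq_add_sq hε (u - t)).comp u
    ((hasDerivAt_id' u).sub_const t)).const_add 1).div_const 4).congr_deriv ?_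
  rw [psiDeriv]
  ring

@[fun_prop]
lemma continuous_psi (hε : ε ≠ 0) : Continuous (psi t ε) :=
  continuous_iff_continuousAt.2 fun u => (hasDerivAt_psi hε u).continuousAt

@[fun_prop]
lemma continuous_psiDeriv (hε : ε ≠ 0) : Continuous (psiDeriv t ε) := by
  unfold psiDeriv
  fun_prop (disch := intro; positivity)

lemma tendsto_psi_sqrt {r : ℝ} (hr : 0 ≤ r) (hrt : r ≠ t) :
    Tendsto (fun ε => psi t ε √(r ^ 2 + ε ^ 2)) (𝓝 0) (𝓝 (psi t 0 r)) := by
  have hden : √((√(r ^ 2 + 0 ^ 2) - t) ^ 2 + 0 ^ 2) ≠ 0 := by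
    simp [Real.sqrt_sq hr, Real.sqrt_sq_eq_abs, sub_eq_zero, hrt]
  have hc : ContinuousAt (fun ε => psi t ε √(r ^ 2 + ε ^ 2)) 0 := by
    unfold psi
    fun_prop (disch := exact hden)
  simpa [Real.sqrt_sq hr] using hc.tendsto

lemma tendsto_sqrt_sq_add_sq {r : ℝ} (hr : 0 ≤ r) :
    Tendsto (fun ε => √(r ^ 2 + ε ^ 2)) (𝓝[>] 0) (𝓝 r) := by
  have h : Continuous fun ε : ℝ => √(r ^ 2 + ε ^ 2) := by fun_prop
  simpa [Real.sqrt_sq hr] using (h.tendsto 0).mono_left nhdsWithin_le_nhds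

end SmoothStep

section DerivHeps

variable {t ε : ℝ}

lemma hasDerivAt_heps (hε : ε ≠ 0) {s : ℝ} (hs : 0 < s + ε ^ 2) :
    HasDerivAt (heps t ε) (psi t ε √(s + ε ^ 2) / √(s + ε ^ 2)) s := by
  have hu : HasDerivAt (fun s => √(s + ε ^ 2)) (1 / (2 * √(s + ε ^ 2))) s := by
    simpa using ((hasDerivAt_id' s).add_const (ε ^ 2)).sqrt hs.ne'
  have hv := (hasDerivAt_sqrt_sq_add_sq hε (√(s + ε ^ 2) - t)).comp s (hu.sub_const t)
  have hu₀ : 0 < √(s + ε ^ 2) := Real.sqrt_pos.2 hs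
  refine (((hv.add hu).sub_const t).const_mul (1 / 2)).congr_deriv ?_
  unfold psi
  field_simp
  ring

lemma deriv_deriv_heps (hε : ε ≠ 0) {s : ℝ} (hs : 0 < s + ε ^ 2) :
    deriv (deriv (heps t ε)) s = (psiDeriv t ε √(s + ε ^ 2) * √(s + ε ^ 2) - psi t ε √(s + ε ^ 2))
      / (2 * √(s + ε ^ 2) ^ 3) := by
  have heq : deriv (heps t ε) =ᶠ[𝓝 s] fun s => psi t ε √(s + ε ^ 2) / √(s + ε ^ 2) := by
    filter_upwards [eventually_gt_nhds (show -ε ^ 2 < s by linarith)] with s' hs'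
    exact (hasDerivAt_heps hε (by linarith)).deriv
  have hu : HasDerivAt (fun s => √(s + ε ^ 2)) (1 / (2 * √(s + ε ^ 2))) s := by
    simpa using ((hasDerivAt_id' s).add_const (ε ^ 2)).sqrt hs.ne'
  have hu₀ : 0 < √(s + ε ^ 2) := Real.sqrt_pos.2 hs
  have hq : HasDerivAt (fun s => psi t ε √(s + ε ^ 2) / √(s + ε ^ 2)) _ s :=
    ((hasDerivAt_psi hε _).comp s hu).div hu hu₀.ne'
  rw [heq.deriv_eq, hq.deriv, Function.comp_apply]
  field_simp

lemma deriv_deriv_heps_mul_deriv_heps_pow {k : ℕ} (hk : 1 ≤ k) (hε : ε ≠ 0) (r : ℝ) :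
    deriv (deriv (heps t ε)) (r ^ 2) * deriv (heps t ε) (r ^ 2) ^ (k - 1) =
      psi t ε √(r ^ 2 + ε ^ 2) ^ (k - 1) * psiDeriv t ε √(r ^ 2 + ε ^ 2)
          / (2 * √(r ^ 2 + ε ^ 2) ^ (k + 1))
        - psi t ε √(r ^ 2 + ε ^ 2) ^ k / (2 * √(r ^ 2 + ε ^ 2) ^ (k + 2)) := by
  have hs : 0 < r ^ 2 + ε ^ 2 := by positivity
  obtain ⟨m, rfl⟩ := Nat.exists_eq_add_of_le' hk
  have hu₀ : 0 < √(r ^ 2 + ε ^ 2) := Real.sqrt_pos.2 hs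
  rw [deriv_deriv_heps hε hs, (hasDerivAt_heps hε hs).deriv, Nat.add_sub_cancel, div_pow]
  field_simp
  ring

end DerivHeps

lemma abs_rpow_div_sqrt_pow_sub_rpow_le {k : ℕ} {a r M : ℝ} (ha : (k : ℝ) ≤ a) (hr : 0 ≤ r)
    (hrM : r ≤ M) (ε : ℝ) :
    |r ^ (a + 1) / √(r ^ 2 + ε ^ 2) ^ k - r ^ (a + 1 - k)| ≤ k * M ^ (a - k) * |ε| := by
  have hMak : 0 ≤ M ^ (a - k) := Real.rpow_nonneg (hr.trans hrM) _
  rcases hr.eq_or_lt with rfl | hr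
  · have hk : (0 : ℝ) ≤ k := k.cast_nonneg
    rw [Real.zero_rpow (by linarith), Real.zero_rpow (by linarith), zero_div, sub_zero, abs_zero]
    exact mul_nonneg (mul_nonneg hk hMak) (abs_nonneg ε)
  set u := √(r ^ 2 + ε ^ 2)
  set P := r ^ (a - k)
  have hru : r ≤ u := by simpa [abs_of_pos hr] using abs_le_sqrt_sq_add_sq r ε
  have hu0 : 0 < u := hr.trans_le hru
  have hur : u - r ≤ |ε| := by
    rw [sub_le_iff_le_add, Real.sqrt_le_left (by positivity)]
    nlinarith [sq_abs ε, abs_nonneg ε]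
  have hP : 0 ≤ P := Real.rpow_nonneg hr.le _
  have hPM : P ≤ M ^ (a - k) := Real.rpow_le_rpow hr.le hrM (by linarith)
  have hq0 : 0 ≤ r / u := by positivity
  have hq1 : r / u ≤ 1 := (div_le_one hu0).2 hru
  have hbern : 1 - (r / u) ^ k ≤ k * (1 - r / u) := by
    have := one_add_mul_le_pow (a := r / u - 1) (by linarith) k
    rw [add_sub_cancel] at this
    linarith
  have hsplit : r ^ (a + 1) / u ^ k - r ^ (a + 1 - k) = -(P * r * (1 - (r / u) ^ k)) := by
    rw [show a + 1 = (a - k) + 1 + k by ring, Real.rpow_add hr, Real.rpow_add_one hr.ne',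
      Real.rpow_natCast, show a - k + 1 + k - k = (a - k) + 1 by ring, Real.rpow_add_one hr.ne',
      div_pow]
    field_simp
    ring
  rw [hsplit, abs_neg,
    abs_of_nonneg (mul_nonneg (mul_nonneg hP hr.le) (sub_nonneg.2 (pow_le_one₀ hq0 hq1)))]
  calc P * r * (1 - (r / u) ^ k) ≤ P * r * (k * (1 - r / u)) := by gcongr
    _ = k * P * (r / u) * (u - r) := by field_simp
    _ ≤ k * M ^ (a - k) * 1 * |ε| := by gcongr
    _ = _ := by ring

lemma tendstoUniformlyOn_mul_rpow_div_sqrt_pow {k : ℕ} {a M : ℝ} {ζ : ℝ → ℝ} (ha : (k : ℝ) ≤ a)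
    (hζ : ContinuousOn ζ (Icc 0 M)) :
    TendstoUniformlyOn (fun ε r => ζ r * r ^ (a + 1) / √(r ^ 2 + ε ^ 2) ^ k)
      (fun r => ζ r * r ^ (a + 1 - k)) (𝓝 0) (Icc 0 M) := by
  obtain ⟨C, hC⟩ := isCompact_Icc.exists_bound_of_continuousOn hζ
  rw [Metric.tendstoUniformlyOn_iff]
  intro σ hσ
  have h : Tendsto (fun ε : ℝ => C * (k * M ^ (a - k) * |ε|)) (𝓝 0) (𝓝 0) := by
    simpa using ((continuous_abs.const_mul (k * M ^ (a - k))).const_mul C).tendsto 0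
  filter_upwards [(tendsto_order.1 h).2 σ hσ] with ε hε r hr
  have hζr : |ζ r| ≤ C := by simpa using hC r hr
  rw [Real.dist_eq, abs_sub_comm, mul_div_assoc, ← mul_sub, abs_mul]
  exact (mul_le_mul hζr (abs_rpow_div_sqrt_pow_sub_rpow_le ha hr.1 hr.2 ε) (abs_nonneg _)
    ((abs_nonneg _).trans hζr)).trans_lt hε

lemma mul_rpow_add_two_mul_half_pow {r : ℝ} (hr : 0 < r) (a c : ℝ) (k : ℕ) :
    c * r ^ (a + 2) * ((1 / 2) ^ k / (2 * r ^ (k + 2))) = (2 ^ (k + 1))⁻¹ * (c * r ^ (a - k)) := by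
  have h : r ^ (a + 2) = r ^ (a - k) * r ^ (k + 2) := by
    rw [← Real.rpow_natCast, ← Real.rpow_add hr]; push_cast; ring_nf
  rw [h, div_pow, one_pow]
  field_simp
  ring

section Limits

variable {k : ℕ} {a t ε : ℝ}

lemma norm_mul_rpow_mul_psi_pow_div_le {r : ℝ} (hr : 0 < r) (c : ℝ) :
    ‖c * r ^ (a + 2) * (psi t ε √(r ^ 2 + ε ^ 2) ^ k / (2 * √(r ^ 2 + ε ^ 2) ^ (k + 2)))‖ ≤
      (2 ^ (k + 1))⁻¹ * (|c| * r ^ (a - k)) := by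
  have hru : r ≤ √(r ^ 2 + ε ^ 2) := by simpa [abs_of_pos hr] using abs_le_sqrt_sq_add_sq r ε
  have hψ₀ := psi_nonneg t ε √(r ^ 2 + ε ^ 2)
  have hψ₁ := psi_le_half t ε √(r ^ 2 + ε ^ 2)
  rw [← mul_rpow_add_two_mul_half_pow hr, Real.norm_eq_abs, abs_mul, abs_mul,
    abs_of_nonneg (Real.rpow_nonneg hr.le _),
    abs_of_nonneg (div_nonneg (pow_nonneg hψ₀ k) (by positivity))]
  gcongr

lemma tendsto_mul_rpow_mul_psi_pow_div (hk : k ≠ 0) {r : ℝ} (hr : 0 < r) (hrt : r ≠ t) (c : ℝ) :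
    Tendsto (fun ε => c * r ^ (a + 2) *
        (psi t ε √(r ^ 2 + ε ^ 2) ^ k / (2 * √(r ^ 2 + ε ^ 2) ^ (k + 2))))
      (𝓝[>] 0) (𝓝 (if t < r then (2 ^ (k + 1))⁻¹ * (c * r ^ (a - k)) else 0)) := by
  have h := tendsto_const_nhds (x := c * r ^ (a + 2)) |>.mul
    ((((tendsto_psi_sqrt hr.le hrt).mono_left nhdsWithin_le_nhds).pow k).div
      (((tendsto_sqrt_sq_add_sq hr.le).pow (k + 2)).const_mul 2) (by positivity))
  rcases hrt.lt_or_gt with hlt | hgt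
  · rw [if_neg (not_lt.2 hlt.le)]
    rwa [psi_zero_of_lt hlt, zero_pow hk, zero_div, mul_zero] at h
  · rw [if_pos hgt]
    rwa [psi_zero_of_gt hgt, mul_rpow_add_two_mul_half_pow hr] at h

lemma hasDerivAt_psi_sqrt_pow (hε : ε ≠ 0) (k : ℕ) (r : ℝ) :
    HasDerivAt (fun r => psi t ε √(r ^ 2 + ε ^ 2) ^ k) (k * psi t ε √(r ^ 2 + ε ^ 2) ^ (k - 1) *
      (psiDeriv t ε √(r ^ 2 + ε ^ 2) * (r / √(r ^ 2 + ε ^ 2)))) r :=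
  ((hasDerivAt_psi hε _).comp r (hasDerivAt_sqrt_sq_add_sq hε r)).pow k

lemma tendsto_psi_sqrt_pow_of_lt (hk : k ≠ 0) {r : ℝ} (hr : 0 ≤ r) (hrt : r < t) :
    Tendsto (fun ε => psi t ε √(r ^ 2 + ε ^ 2) ^ k) (𝓝[>] 0) (𝓝 0) := by
  simpa [psi_zero_of_lt hrt, zero_pow hk] using
    ((tendsto_psi_sqrt hr hrt.ne).mono_left nhdsWithin_le_nhds).pow k

lemma tendsto_psi_sqrt_pow_of_gt {r : ℝ} (hr : 0 ≤ r) (hrt : t < r) :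
    Tendsto (fun ε => psi t ε √(r ^ 2 + ε ^ 2) ^ k) (𝓝[>] 0) (𝓝 ((1 / 2) ^ k)) := by
  simpa [psi_zero_of_gt hrt] using
    ((tendsto_psi_sqrt hr hrt.ne').mono_left nhdsWithin_le_nhds).pow k

lemma tendsto_integral_mul_rpow_mul_psi_pow_div (hk : k ≠ 0) {M : ℝ} {ζ : ℝ → ℝ}
    (ha : (k : ℝ) ≤ a) (ht : 0 ≤ t) (hM : 0 ≤ M) (hζ : ContinuousOn ζ (Ici 0))
    (hζM : ∀ r, M < r → ζ r = 0) :
    Tendsto (fun ε => ∫ r in 0..M, ζ r * r ^ (a + 2) *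
        (psi t ε √(r ^ 2 + ε ^ 2) ^ k / (2 * √(r ^ 2 + ε ^ 2) ^ (k + 2))))
      (𝓝[>] 0) (𝓝 ((2 ^ (k + 1))⁻¹ * ∫ r in Ioi t, ζ r * r ^ (a - k))) := by
  set F : ℝ → ℝ := (Ioi t).indicator fun r => (2 ^ (k + 1))⁻¹ * (ζ r * r ^ (a - k))
  have hF : ∫ r in 0..M, F r = (2 ^ (k + 1))⁻¹ * ∫ r in Ioi t, ζ r * r ^ (a - k) := by
    rw [← setIntegral_Ioi_eq_intervalIntegral hM (fun r hr => by simp [F, hζM r hr]),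
      setIntegral_indicator measurableSet_Ioi, Ioi_inter_Ioi, max_eq_right ht, integral_const_mul]
  rw [← hF]
  refine intervalIntegral.tendsto_integral_filter_of_dominated_convergence
    (fun r => (2 ^ (k + 1))⁻¹ * (|ζ r| * r ^ (a - k))) ?_ ?_ ?_ ?_
  · filter_upwards [self_mem_nhdsWithin] with ε (hε : 0 < ε)
    refine ContinuousOn.aestronglyMeasurable (ContinuousOn.mono (s := Ici 0) ?_ ?_)
      measurableSet_uIoc
    · fun_prop (disch := first | positivity | (intro _ _; positivity) | linarith)
    · rw [uIoc_of_le hM]; exact Ioc_subset_Icc_self.trans Icc_subset_Ici_self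
  · filter_upwards [self_mem_nhdsWithin] with ε (hε : 0 < ε)
    refine ae_of_all _ fun r hr => norm_mul_rpow_mul_psi_pow_div_le ?_ _
    rw [uIoc_of_le hM] at hr; exact hr.1
  · refine ContinuousOn.intervalIntegrable_of_Icc hM (ContinuousOn.mono ?_ Icc_subset_Ici_self)
    fun_prop (disch := linarith)
  · filter_upwards [(countable_singleton t).ae_notMem volume] with r hrt hr
    rw [uIoc_of_le hM] at hr
    simpa [F, indicator_apply] using tendsto_mul_rpow_mul_psi_pow_div hk hr.1 hrt (ζ r)

lemma tendsto_integral_mul_deriv_psi_sqrt_pow (hk : k ≠ 0) {M : ℝ} {ζ : ℝ → ℝ}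
    (ha : (k : ℝ) ≤ a) (ht : 0 ≤ t) (htM : t < M) (hζ : ContinuousOn ζ (Ici 0)) :
    Tendsto (fun ε => ∫ r in 0..M, ζ r * r ^ (a + 1) / √(r ^ 2 + ε ^ 2) ^ k *
        (k * psi t ε √(r ^ 2 + ε ^ 2) ^ (k - 1) *
          (psiDeriv t ε √(r ^ 2 + ε ^ 2) * (r / √(r ^ 2 + ε ^ 2)))))
      (𝓝[>] 0) (𝓝 (ζ t * t ^ (a + 1 - k) * (1 / 2) ^ k)) := by
  have hM : 0 ≤ M := ht.trans htM.le
  have hg := tendstoUniformlyOn_mul_rpow_div_sqrt_pow ha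
    (hζ.mono (Icc_subset_Ici_self : Icc 0 M ⊆ _))
  have hg₀ : ContinuousOn (fun r => ζ r * r ^ (a + 1 - k)) (Ici 0) := by
    fun_prop (disch := linarith)
  have hgw : ∀ᶠ ε in 𝓝[>] (0 : ℝ), IntervalIntegrable (fun r => ζ r * r ^ (a + 1) /
      √(r ^ 2 + ε ^ 2) ^ k * (k * psi t ε √(r ^ 2 + ε ^ 2) ^ (k - 1) *
        (psiDeriv t ε √(r ^ 2 + ε ^ 2) * (r / √(r ^ 2 + ε ^ 2))))) volume 0 M := by
    filter_upwards [self_mem_nhdsWithin] with ε (hε : 0 < ε)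
    refine ContinuousOn.intervalIntegrable_of_Icc hM (ContinuousOn.mono ?_ Icc_subset_Ici_self)
    fun_prop (disch := first | positivity | (intro _ _; positivity) | linarith)
  have hW : ∀ᶠ ε in 𝓝[>] (0 : ℝ), ∀ r ∈ Icc 0 M,
      HasDerivAt (fun r => psi t ε √(r ^ 2 + ε ^ 2) ^ k) (k * psi t ε √(r ^ 2 + ε ^ 2) ^ (k - 1) *
        (psiDeriv t ε √(r ^ 2 + ε ^ 2) * (r / √(r ^ 2 + ε ^ 2)))) r ∧
      0 ≤ k * psi t ε √(r ^ 2 + ε ^ 2) ^ (k - 1) *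
        (psiDeriv t ε √(r ^ 2 + ε ^ 2) * (r / √(r ^ 2 + ε ^ 2))) := by
    filter_upwards [self_mem_nhdsWithin] with ε (hε : 0 < ε) r hr
    have := psi_nonneg t ε √(r ^ 2 + ε ^ 2)
    have := psiDeriv_nonneg t ε √(r ^ 2 + ε ^ 2)
    exact ⟨hasDerivAt_psi_sqrt_pow hε.ne' k r, by have := hr.1; positivity⟩
  have hconc := tendsto_integral_mul_sub_of_tendstoUniformlyOn ht htM.le
    (Metric.tendstoUniformlyOn_iff.2 fun σ hσ =>
      (Metric.tendstoUniformlyOn_iff.1 hg σ hσ).filter_mono nhdsWithin_le_nhds)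
    (hg₀.mono Icc_subset_Ici_self) hgw hW
    (Eventually.of_forall fun ε r _ => abs_psi_pow_le_one t ε _ k)
    (fun p hp => by
      simpa using (tendsto_psi_sqrt_pow_of_lt hk hp.1 hp.2).sub
        (tendsto_psi_sqrt_pow_of_lt hk le_rfl (hp.1.trans_lt hp.2)))
    (fun q hq => by
      simpa using (tendsto_psi_sqrt_pow_of_gt (k := k) hM (hq.1.trans_le hq.2)).sub
        (tendsto_psi_sqrt_pow_of_gt (k := k) (ht.trans hq.1.le) hq.1))
  have hstep : Tendsto (fun ε => ζ t * t ^ (a + 1 - k) *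
      (psi t ε √(M ^ 2 + ε ^ 2) ^ k - psi t ε √(0 ^ 2 + ε ^ 2) ^ k)) (𝓝[>] 0)
      (𝓝 (ζ t * t ^ (a + 1 - k) * (1 / 2) ^ k)) := by
    rcases ht.eq_or_lt with rfl | ht₀
    · simp [Real.zero_rpow (by linarith : a + 1 - k ≠ 0)]
    · simpa using tendsto_const_nhds.mul
        ((tendsto_psi_sqrt_pow_of_gt hM htM).sub (tendsto_psi_sqrt_pow_of_lt hk le_rfl ht₀))
  simpa using hconc.add hstep

end Limits

lemma setIntegral_Ioi_mul_deriv_deriv_heps_eq {k : ℕ} (hk : 1 ≤ k) {a t ε M : ℝ} {ζ : ℝ → ℝ}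
    (ha : (k : ℝ) ≤ a) (hε : ε ≠ 0) (hM : 0 ≤ M) (hζ : ContinuousOn ζ (Ici 0))
    (hζM : ∀ r, M < r → ζ r = 0) :
    ∫ r in Ioi 0, ζ r * r ^ (a + 2) * deriv (deriv (heps t ε)) (r ^ 2) *
        (deriv (heps t ε) (r ^ 2)) ^ (k - 1) =
      (2 * k : ℝ)⁻¹ * (∫ r in 0..M, ζ r * r ^ (a + 1) / √(r ^ 2 + ε ^ 2) ^ k *
        (k * psi t ε √(r ^ 2 + ε ^ 2) ^ (k - 1) *
          (psiDeriv t ε √(r ^ 2 + ε ^ 2) * (r / √(r ^ 2 + ε ^ 2))))) -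
      ∫ r in 0..M, ζ r * r ^ (a + 2) *
        (psi t ε √(r ^ 2 + ε ^ 2) ^ k / (2 * √(r ^ 2 + ε ^ 2) ^ (k + 2))) := by
  have hint : ∀ {f : ℝ → ℝ}, ContinuousOn f (Ici 0) → IntervalIntegrable f volume 0 M :=
    fun hf => (hf.mono Icc_subset_Ici_self).intervalIntegrable_of_Icc hM
  rw [setIntegral_Ioi_eq_intervalIntegral hM fun r hr => by simp [hζM r hr],
    ← intervalIntegral.integral_const_mul, ← intervalIntegral.integral_sub
      (hint (by fun_prop (disch := first | positivity | (intro _ _; positivity) | linarith)))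
      (hint (by fun_prop (disch := first | positivity | (intro _ _; positivity) | linarith)))]
  refine intervalIntegral.integral_congr fun r hr => ?_
  rw [uIcc_of_le hM] at hr
  have hu₀ : 0 < √(r ^ 2 + ε ^ 2) := by positivity
  obtain ⟨m, rfl⟩ := Nat.exists_eq_add_of_le' hk
  rw [mul_assoc _ (deriv _ _), deriv_deriv_heps_mul_deriv_heps_pow hk hε,
    show a + 2 = a + 1 + 1 by ring, Real.rpow_add_one' hr.1 (by linarith), Nat.add_sub_cancel]
  field_simp
  ring

/-- For an integer `k ≥ 1`, a real `a ≥ k`, `t ≥ 0` and a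
continuous compactly supported `ζ` on `[0,∞)`, as `ε → 0⁺`,
`∫_0^∞ ζ(r) r^{a+2} h_ε''(r²) (h_ε'(r²))^{k-1} dr` converges to
`−2^{−(k+1)} ∫_t^∞ ζ(r) r^{a−k} dr + (2^{−(k+1)}/k) ζ(t) t^{a+1−k}`
(with `t^{a+1−k} = 0` when `t = 0`, since `a+1−k ≥ 1`). -/
theorem stmt11 (k : ℕ) (hk : 1 ≤ k) (a : ℝ) (ha : (k : ℝ) ≤ a) (t : ℝ) (ht : 0 ≤ t)
    (ζ : ℝ → ℝ) (hcont : ContinuousOn ζ (Set.Ici 0))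
    (hsupp : ∃ M : ℝ, ∀ r : ℝ, M < r → ζ r = 0) :
    Tendsto
      (fun ε : ℝ => ∫ r in Set.Ioi (0 : ℝ),
        ζ r * r ^ (a + 2) * deriv (deriv (heps t ε)) (r ^ 2) * (deriv (heps t ε) (r ^ 2)) ^ (k - 1))
      (nhdsWithin 0 (Set.Ioi 0))
      (𝓝 (-((2 : ℝ) ^ (k + 1))⁻¹ * (∫ r in Set.Ioi t, ζ r * r ^ (a - (k : ℝ))) +
        ((2 : ℝ) ^ (k + 1))⁻¹ / (k : ℝ) * ζ t * t ^ (a + 1 - (k : ℝ)))) := by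
  obtain ⟨M, htM, hζM⟩ : ∃ M, t < M ∧ ∀ r, M < r → ζ r = 0 := by
    obtain ⟨M, hM⟩ := hsupp
    exact ⟨max M t + 1, by linarith [le_max_right M t],
      fun r hr => hM r (by linarith [le_max_left M t])⟩
  have hM : 0 ≤ M := ht.trans htM.le
  have hk₀ : k ≠ 0 := by omega
  have hlim := ((tendsto_integral_mul_deriv_psi_sqrt_pow hk₀ ha ht htM hcont).const_mul
    (2 * k : ℝ)⁻¹).sub (tendsto_integral_mul_rpow_mul_psi_pow_div hk₀ ha ht hM hcont hζM)
  have hval : (2 * k : ℝ)⁻¹ * (ζ t * t ^ (a + 1 - k) * (1 / 2) ^ k) -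
      (2 ^ (k + 1))⁻¹ * ∫ r in Ioi t, ζ r * r ^ (a - k) =
      -((2 : ℝ) ^ (k + 1))⁻¹ * (∫ r in Ioi t, ζ r * r ^ (a - k)) +
        ((2 : ℝ) ^ (k + 1))⁻¹ / k * ζ t * t ^ (a + 1 - k) := by
    rw [div_pow, one_pow]
    field_simp
    ring
  rw [← hval]
  refine hlim.congr' ?_
  filter_upwards [self_mem_nhdsWithin] with ε (hε : 0 < ε)
  exact (setIntegral_Ioi_mul_deriv_deriv_heps_eq hk ha hε.ne' hM hcont hζM).symm
end
end

section
/- Let n ≥ 1 and 0 ≤ k ≤ n be integers and l > 0 a real number. Let ω be a form of bidegree (n−k, k) on ℝ^n × ℝ^n that is invariant under translations in the second factor (ω_{(x,ξ)} = ω_{(x,ξ′)} for all x, ξ, ξ′) and homogeneous of degree l in the first factor (ω_{(tx,ξ)} = t^l ω_{(x,ξ)} for all t > 0 and all (x,ξ)). Then there exists a constant C ≥ 0 such that for every convex function f : ℝ^n → ℝ of class C² and every x ∈ ℝ^n, |ω_{(x, ∇f(x))}((e_1, D²f(x)e_1), …, (e_n, D²f(x)e_n))| ≤ C · |x|^l ·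 e_k(λ_1(x), …, λ_n(x)), where e_1,…,e_n is the standard basis of ℝ^n, λ_1(x),…,λ_n(x) are the eigenvalues of the Hessian D²f(x) (with multiplicity), and e_k denotes the k-th elementary symmetric polynomial. -/
/-!
Statement 18: a form of bidegree `(n-k,k)` which is translation invariant in the
second factor and homogeneous of degree `l > 0` in the first factor satisfies
`|ω_{(x,∇f(x))}((e_i, D²f(x)e_i)_i)| ≤ C |x|^l e_k(λ_1(x),…,λ_n(x))` for all convex
`C²` functions `f`, where the `λ_i(x)` are the eigenvalues of the Hessian.
-/

noncomputable section

open scoped Classical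

/-- `ℝⁿ` with its Euclidean structure. -/
abbrev En (n : ℕ) := EuclideanSpace ℝ (Fin n)

/-- A (continuous) form of bidegree `(n-k, k)` on `ℝⁿ × ℝⁿ`. -/
structure BidegreeForm (n k : ℕ) where
  form : En n × En n → AlternatingMap ℝ (En n × En n) ℝ (Fin n)
  cont : ∀ v : Fin n → En n × En n, Continuous fun x => form x v
  vanish_fst : ∀ (x : En n × En n) (v : Fin n → En n × En n),
    n - k + 1 ≤ (Finset.univ.filter fun i => (v i).2 = 0).card → form x v = 0
  vanish_snd : ∀ (x : En n × En n) (v : Fin n → En n × En n),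
    k + 1 ≤ (Finset.univ.filter fun i => (v i).1 = 0).card → form x v = 0

/-- The Hessian of `f` at `x`, applied to a vector `v`. -/
def hess {n : ℕ} (f : En n → ℝ) (x v : En n) : En n :=
  fderiv ℝ (fun y => gradient f y) x v

/-- The `k`-th elementary symmetric polynomial in `n` variables. -/
def esymm (n k : ℕ) (lam : Fin n → ℝ) : ℝ :=
  ∑ s ∈ Finset.powersetCard k (Finset.univ : Finset (Fin n)), ∏ i ∈ s, lam i

/-!
By translation invariance and homogeneity, `ω_{(x,∇f(x))} = |x|^l ω_{(u,0)}` with `|u| ≤ 1`, and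
by compactness of the unit ball the multilinear maps `ω_{(u,0)}`, `|u| ≤ 1`, are uniformly bounded.
Passing from the standard basis to an orthonormal eigenbasis `b` of `D²f(x)` multiplies the value
of an `n`-form by a determinant `±1`, so it suffices to bound `ω_{(u,0)}((b_i, λ_i b_i)_i)`.
Expanding `(b_i, λ_i b_i) = (b_i, 0) + λ_i (0, b_i)` multilinearly, the bidegree condition kills
every term except those with exactly `k` vectors `(0, b_i)`; these carry the weights
`∏_{i ∈ s} λ_i ≥ 0` (convexity), which add up to `e_k(λ)`.
-/

open Finset
open scoped RealInnerProductSpace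

section MultilinearBound

variable {𝕜 ι κ E F : Type*} [NontriviallyNormedField 𝕜] [CompleteSpace 𝕜]
  [NormedAddCommGroup E] [NormedSpace 𝕜 E]
  [SeminormedAddCommGroup F] [NormedSpace 𝕜 F] [Fintype ι]

theorem MultilinearMap.norm_apply_le_of_basis [Fintype κ] (b : Module.Basis κ 𝕜 E)
    (T : MultilinearMap 𝕜 (fun _ : ι => E) F) (v : ι → E) :
    ‖T v‖ ≤ (∑ J : ι → κ, ‖T (b ∘ J)‖) *
      ∏ i, (‖(b.equivFunL : E →L[𝕜] κ → 𝕜)‖ * ‖v i‖) := by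
  have hcoord : ∀ i j, ‖b.equivFun (v i) j‖ ≤ ‖(b.equivFunL : E →L[𝕜] κ → 𝕜)‖ * ‖v i‖ :=
    fun i j => (norm_le_pi_norm (b.equivFunL (v i)) j).trans
      ((b.equivFunL : E →L[𝕜] κ → 𝕜).le_opNorm (v i))
  have hexpand : T v = ∑ J : ι → κ, (∏ i, b.equivFun (v i) (J i)) • T (b ∘ J) := by
    conv_lhs => rw [show v = fun i => ∑ j, b.equivFun (v i) j • b j from
      funext fun i => (b.sum_equivFun (v i)).symm]
    rw [T.map_sum]
    exact sum_congr rfl fun J _ => T.map_smul_univ _ _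
  rw [hexpand, sum_mul]
  refine (norm_sum_le _ _).trans (sum_le_sum fun J _ => ?_)
  rw [norm_smul, norm_prod, mul_comm]
  exact mul_le_mul_of_nonneg_left (prod_le_prod (fun _ _ => norm_nonneg _)
    fun i _ => hcoord i (J i)) (norm_nonneg _)

theorem IsCompact.exists_bound_multilinearMap [FiniteDimensional 𝕜 E] {X : Type*}
    [TopologicalSpace X] {K : Set X} (hK : IsCompact K)
    (T : X → MultilinearMap 𝕜 (fun _ : ι => E) F)
    (hT : ∀ v, ContinuousOn (fun x => T x v) K) :
    ∃ C, 0 ≤ C ∧ ∀ x ∈ K, ∀ v, ‖T x v‖ ≤ C * ∏ i, ‖v i‖ := by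
  let b := Module.finBasis 𝕜 E
  set c := ‖(b.equivFunL : E →L[𝕜] Fin (Module.finrank 𝕜 E) → 𝕜)‖
  obtain ⟨M, hM⟩ := hK.exists_bound_of_continuousOn
    (f := fun x => ∑ J : ι → Fin (Module.finrank 𝕜 E), ‖T x (b ∘ J)‖)
    (continuousOn_finsetSum _ fun J _ => (hT _).norm)
  refine ⟨max M 0 * c ^ Fintype.card ι, by positivity, fun x hx v => ?_⟩
  calc ‖T x v‖ ≤ (∑ J : ι → Fin (Module.finrank 𝕜 E), ‖T x (b ∘ J)‖) * ∏ i, (c * ‖v i‖) :=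
        (T x).norm_apply_le_of_basis b v
    _ ≤ max M 0 * ∏ i, (c * ‖v i‖) := by
        gcongr
        exact (le_abs_self _).trans ((hM x hx).trans (le_max_left _ _))
    _ = max M 0 * c ^ Fintype.card ι * ∏ i, ‖v i‖ := by
        rw [prod_mul_distrib, prod_const, card_univ, mul_assoc]

end MultilinearBound

section Homogeneous

variable {E V : Type*} [NormedAddCommGroup E] [NormedSpace ℝ E] [AddCommGroup V] [Module ℝ V]
  {φ : E → V} {l : ℝ}

theorem map_zero_of_rpow_homogeneous (hl : 0 < l)
    (hφ : ∀ t : ℝ, 0 < t → ∀ x, φ (t • x) = t ^ l • φ x) : φ 0 = 0 := by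
  have h2 : φ 0 = (2 : ℝ) ^ l • φ 0 := by simpa using hφ 2 two_pos 0
  have h2l : (2 : ℝ) ^ l - 1 ≠ 0 :=
    sub_ne_zero.2 (Real.one_lt_rpow (by norm_num) hl).ne'
  exact (smul_eq_zero.1 (by rw [sub_smul, one_smul, ← h2, sub_self])).resolve_left h2l

theorem eq_norm_rpow_smul_of_rpow_homogeneous (hl : 0 < l)
    (hφ : ∀ t : ℝ, 0 < t → ∀ x, φ (t • x) = t ^ l • φ x) (x : E) :
    φ x = ‖x‖ ^ l • φ (‖x‖⁻¹ • x) := by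
  rcases eq_or_ne x 0 with rfl | hx
  · simp [map_zero_of_rpow_homogeneous hl hφ]
  · rw [← hφ _ (norm_pos_iff.2 hx), smul_inv_smul₀ (norm_ne_zero_iff.2 hx)]

end Homogeneous

section Hessian

variable {E : Type*} [NormedAddCommGroup E] [InnerProductSpace ℝ E] [CompleteSpace E]

theorem ContDiff.differentiable_gradient {f : E → ℝ} (hf : ContDiff ℝ 2 f) :
    Differentiable ℝ (gradient f) :=
  ((InnerProductSpace.toDual ℝ E).symm.contDiff.comp
    (hf.fderiv_right (m := 1) (by norm_num))).differentiable (by norm_num)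

theorem ConvexOn.inner_fderiv_gradient_apply_self_nonneg {f : E → ℝ}
    (hf : ConvexOn ℝ Set.univ f) (hfd : Differentiable ℝ f) {x : E}
    (hg : DifferentiableAt ℝ (gradient f) x) (v : E) :
    0 ≤ ⟪fderiv ℝ (gradient f) x v, v⟫ := by
  have hline : ∀ t : ℝ, HasDerivAt (fun s : ℝ => x + s • v) v t := fun t => by
    simpa using ((hasDerivAt_id t).smul_const v).const_add x
  set q : ℝ → ℝ := fun t => ⟪gradient f (x + t • v), v⟫
  have hφ : ∀ t, HasDerivAt (fun t : ℝ => f (x + t • v)) (q t) t := fun t =>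
    ((hfd _).hasFDerivAt.comp_hasDerivAt t (hline t)).congr_deriv
      InnerProductSpace.toDual_symm_apply.symm
  have hφconv : ConvexOn ℝ Set.univ fun t : ℝ => f (x + t • v) := by
    simpa [Function.comp_def, AffineMap.lineMap_apply, add_comm] using
      hf.comp_affineMap (AffineMap.lineMap x (x + v))
  have hq_mono : Monotone q := fun s t hst => by
    simpa only [(hφ s).deriv, (hφ t).deriv] using
      hφconv.monotoneOn_deriv (fun y _ => (hφ y).differentiableAt) trivial trivial hst
  have hq : HasDerivAt q ⟪fderiv ℝ (gradient f) x v, v⟫ 0 := by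
    have hcomp : HasDerivAt (fun t : ℝ => gradient f (x + t • v))
        (fderiv ℝ (gradient f) x v) 0 :=
      hg.hasFDerivAt.comp_hasDerivAt_of_eq 0 (hline 0) (by simp)
    simpa only [inner_zero_right, zero_add] using hcomp.inner ℝ (hasDerivAt_const 0 v)
  exact hq.deriv ▸ hq_mono.deriv_nonneg

theorem ConvexOn.hess_eigenvalue_nonneg {n : ℕ} {f : En n → ℝ} (hf : ConvexOn ℝ Set.univ f)
    (hf2 : ContDiff ℝ 2 f) {x v : En n} (hv : v ≠ 0) {μ : ℝ} (hμ : hess f x v = μ • v) :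
    0 ≤ μ := by
  have := hf.inner_fderiv_gradient_apply_self_nonneg (hf2.differentiable two_ne_zero)
    (hf2.differentiable_gradient x) v
  rw [← hess, hμ, real_inner_smul_left, real_inner_self_eq_norm_sq] at this
  exact nonneg_of_mul_nonneg_left this (by positivity)

end Hessian

theorem MultilinearMap.map_add_smul_univ {R ι M N : Type*} [CommSemiring R] [AddCommMonoid M]
    [Module R M] [AddCommMonoid N] [Module R N] [DecidableEq ι] [Fintype ι]
    (T : MultilinearMap R (fun _ : ι => M) N) (x y : ι → M) (c : ι → R) :
    T (fun i => x i + c i • y i) = ∑ s : Finset ι, (∏ i ∈ s, c i) • T (s.piecewise y x) := by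
  rw [show (fun i => x i + c i • y i) = (fun i => c i • y i) + x from
    funext fun i => add_comm _ _, T.map_add_univ]
  refine sum_congr rfl fun s _ => ?_
  rw [← T.map_piecewise_smul]
  congr 1
  ext1 i
  by_cases hi : i ∈ s <;> simp [hi]

theorem AlternatingMap.abs_apply_orthonormalBasis_eq {ι E : Type*} [Fintype ι] [DecidableEq ι]
    [NormedAddCommGroup E] [InnerProductSpace ℝ E] (ψ : E [⋀^ι]→ₗ[ℝ] ℝ)
    (b b' : OrthonormalBasis ι ℝ E) : |ψ b'| = |ψ b| := by
  conv_lhs => rw [ψ.eq_smul_basis_det b.toBasis]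
  rw [AlternatingMap.smul_apply, smul_eq_mul, abs_mul,
    ← Real.norm_eq_abs (b.toBasis.det _), b.det_to_matrix_orthonormalBasis, mul_one,
    OrthonormalBasis.coe_toBasis]

theorem AlternatingMap.abs_apply_graph_eq_of_eigenbasis {ι E : Type*} [Fintype ι]
    [DecidableEq ι] [NormedAddCommGroup E] [InnerProductSpace ℝ E]
    (T : (E × E) [⋀^ι]→ₗ[ℝ] ℝ) (H : E →ₗ[ℝ] E) (b b' : OrthonormalBasis ι ℝ E) {lam : ι → ℝ}
    (heig : ∀ i, H (b' i) = lam i • b' i) :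
    |T fun i => (b i, H (b i))| = |T fun i => (b' i, lam i • b' i)| := by
  simpa [← heig] using (T.compLinearMap (LinearMap.id.prod H)).abs_apply_orthonormalBasis_eq b' b

namespace AlternatingMap

variable {n p q : ℕ} {E F : Type*} [SeminormedAddCommGroup E] [NormedSpace ℝ E]
  [SeminormedAddCommGroup F] [NormedSpace ℝ F] [DecidableEq E] [DecidableEq F]
  {T : (E × F) [⋀^Fin n]→ₗ[ℝ] ℝ}

def IsOfBidegree (p q : ℕ) (T : (E × F) [⋀^Fin n]→ₗ[ℝ] ℝ) : Prop :=
  (∀ v : Fin n → E × F, p + 1 ≤ #{i | (v i).2 = 0} → T v = 0) ∧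
    ∀ v : Fin n → E × F, q + 1 ≤ #{i | (v i).1 = 0} → T v = 0

theorem IsOfBidegree.apply_piecewise_eq_zero (hT : T.IsOfBidegree p q) (hpq : p + q = n)
    (x : Fin n → E) (y : Fin n → F) {s : Finset (Fin n)} (hs : #s ≠ q) :
    T (s.piecewise (fun i => (0, y i)) (fun i => (x i, 0))) = 0 := by
  rcases hs.lt_or_gt with hlt | hgt
  · refine hT.1 _ ?_
    have hsub : sᶜ ⊆ univ.filter fun i =>
        (s.piecewise (fun i => ((0 : E), y i)) (fun i => (x i, 0)) i).2 = 0 :=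
      fun i hi => by simp_all
    have := card_le_card hsub
    rw [card_compl, Fintype.card_fin] at this
    omega
  · refine hT.2 _ ?_
    have hsub : s ⊆ univ.filter fun i =>
        (s.piecewise (fun i => ((0 : E), y i)) (fun i => (x i, 0)) i).1 = 0 :=
      fun i hi => by simp_all
    have := card_le_card hsub
    omega

theorem IsOfBidegree.abs_apply_le_mul_esymm (hT : T.IsOfBidegree p q) (hpq : p + q = n)
    {C : ℝ} (hC0 : 0 ≤ C) (hC : ∀ v, |T v| ≤ C * ∏ i, ‖v i‖)
    {x : Fin n → E} {y : Fin n → F} (hx : ∀ i, ‖x i‖ ≤ 1) (hy : ∀ i, ‖y i‖ ≤ 1)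
    {lam : Fin n → ℝ} (hlam : ∀ i, 0 ≤ lam i) :
    |T fun i => (x i, lam i • y i)| ≤ C * esymm n q lam := by
  set W : Finset (Fin n) → Fin n → E × F := fun s =>
    s.piecewise (fun i => (0, y i)) (fun i => (x i, 0))
  have hW : ∀ s, |T (W s)| ≤ C := fun s =>
    (hC _).trans (mul_le_of_le_one_right hC0 (prod_le_one (fun _ _ => norm_nonneg _)
      fun i _ => by by_cases hi : i ∈ s <;> simp [W, hi, hx i, hy i]))
  have hexpand : (T fun i => (x i, lam i • y i)) =
      ∑ s ∈ powersetCard q univ, (∏ i ∈ s, lam i) • T (W s) := by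
    have := T.toMultilinearMap.map_add_smul_univ (fun i => (x i, 0)) (fun i => (0, y i)) lam
    simp only [coe_multilinearMap, Prod.smul_mk, smul_zero, Prod.mk_add_mk, add_zero,
      zero_add] at this
    rw [this]
    refine (sum_subset (subset_univ _) fun s _ hs => ?_).symm
    rw [mem_powersetCard_univ] at hs
    rw [hT.apply_piecewise_eq_zero hpq x y hs, smul_zero]
  rw [hexpand, esymm, mul_sum]
  refine (abs_sum_le_sum_abs _ _).trans (sum_le_sum fun s _ => ?_)
  have hprod : 0 ≤ ∏ i ∈ s, lam i := prod_nonneg fun i _ => hlam i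
  rw [smul_eq_mul, abs_mul, abs_of_nonneg hprod, mul_comm C]
  exact mul_le_mul_of_nonneg_left (hW s) hprod

end AlternatingMap

theorem stmt18_general (n k : ℕ) (hk : k ≤ n) (l : ℝ) (hl : 0 < l)
    (ω : BidegreeForm n k)
    (htrans : ∀ x ξ ξ' : En n, ω.form (x, ξ) = ω.form (x, ξ'))
    (hhom : ∀ t : ℝ, 0 < t → ∀ x ξ : En n, ω.form (t • x, ξ) = t ^ l • ω.form (x, ξ)) :
    ∃ C : ℝ, 0 ≤ C ∧
      ∀ f : En n → ℝ, ConvexOn ℝ Set.univ f → ContDiff ℝ 2 f → ∀ x : En n,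
        ∀ lam : Fin n → ℝ, ∀ bvec : Fin n → En n, Orthonormal ℝ bvec →
          (∀ i, hess f x (bvec i) = lam i • bvec i) →
          |ω.form (x, gradient f x)
              (fun i => (EuclideanSpace.single i 1, hess f x (EuclideanSpace.single i 1)))| ≤
            C * ‖x‖ ^ l * esymm n k lam := by
  obtain ⟨C, hC0, hC⟩ := (isCompact_closedBall (0 : En n) 1).exists_bound_multilinearMap
    (fun u => (ω.form (u, 0)).toMultilinearMap)
    fun v => ((ω.cont v).comp (continuous_id.prodMk continuous_const)).continuousOn
  refine ⟨C, hC0, fun f hf hf2 x lam b hb heig => ?_⟩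
  set u := ‖x‖⁻¹ • x
  have hu : u ∈ Metric.closedBall 0 1 := by
    rw [mem_closedBall_zero_iff, norm_smul, norm_inv, norm_norm]
    exact inv_mul_le_one_of_le₀ le_rfl (norm_nonneg x)
  have hform : ω.form (x, gradient f x) = ‖x‖ ^ l • ω.form (u, 0) := by
    rw [htrans x _ 0]
    exact eq_norm_rpow_smul_of_rpow_homogeneous (φ := fun y => ω.form (y, 0)) hl
      (fun t ht y => hhom t ht y 0) x
  have hlam : ∀ i, 0 ≤ lam i := fun i =>
    hf.hess_eigenvalue_nonneg hf2 (hb.ne_zero i) (heig i)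
  have hchange : |ω.form (u, 0) fun i =>
        (EuclideanSpace.single i 1, hess f x (EuclideanSpace.single i 1))| =
      |ω.form (u, 0) fun i => (b i, lam i • b i)| := by
    simpa [hess] using (ω.form (u, 0)).abs_apply_graph_eq_of_eigenbasis
      (fderiv ℝ (gradient f) x).toLinearMap (EuclideanSpace.basisFun (Fin n) ℝ)
      (.mk hb (hb.linearIndependent.span_eq_top_of_card_eq_finrank' (by simp)).ge)
      (by simpa [hess] using heig)
  have hbidegree : (ω.form (u, 0)).IsOfBidegree (n - k) k := ⟨ω.vanish_fst _, ω.vanish_snd _⟩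
  have hbound := hbidegree.abs_apply_le_mul_esymm (Nat.sub_add_cancel hk) hC0 (hC u hu)
    (fun i => (hb.1 i).le) (fun i => (hb.1 i).le) hlam
  rw [hform, AlternatingMap.smul_apply, smul_eq_mul, abs_mul, abs_of_nonneg (by positivity),
    hchange, mul_comm C, mul_assoc]
  gcongr

/-- If `ω` is a bidegree-`(n-k,k)` form, invariant under
translations in the second factor and homogeneous of degree `l > 0` in the first,
then there is `C ≥ 0` with
`|ω_{(x,∇f(x))}((e_1, D²f(x)e_1),…,(e_n, D²f(x)e_n))| ≤ C |x|^l e_k(λ₁,…,λₙ)` for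
every convex `C²` function `f` and every `x`, where `λ₁,…,λₙ` are the eigenvalues
(with multiplicity, realized by an orthonormal eigenbasis) of `D²f(x)`. -/
theorem stmt18 (n k : ℕ) (hn : 1 ≤ n) (hk : k ≤ n) (l : ℝ) (hl : 0 < l)
    (ω : BidegreeForm n k)
    (htrans : ∀ x ξ ξ' : En n, ω.form (x, ξ) = ω.form (x, ξ'))
    (hhom : ∀ t : ℝ, 0 < t → ∀ x ξ : En n, ω.form (t • x, ξ) = t ^ l • ω.form (x, ξ)) :
    ∃ C : ℝ, 0 ≤ C ∧
      ∀ f : En n → ℝ, ConvexOn ℝ Set.univ f → ContDiff ℝ 2 f → ∀ x : En n,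
        ∀ lam : Fin n → ℝ, ∀ bvec : Fin n → En n, Orthonormal ℝ bvec →
          (∀ i, hess f x (bvec i) = lam i • bvec i) →
          |ω.form (x, gradient f x)
              (fun i => (EuclideanSpace.single i 1, hess f x (EuclideanSpace.single i 1)))| ≤
            C * ‖x‖ ^ l * esymm n k lam :=
  stmt18_general n k hk l hl ω htrans hhom
end
end
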